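/- For every w ∈ Λ₊ one has Σ_{n=0}^∞ |w^{(n)}(w)|² < ∞; consequently K_w(z) = Σ_{n=0}^∞ z^{(n)}(z)·conj(w^{(n)}(w)) converges absolutely for every z ∈ Λ₊, K_w belongs to H₂(Λ₊) with coefficients K̂_w(n) = conj(w^{(n)}(w)), and for every f ∈ H₂(Λ₊), ⟨f, K_w⟩ = f(w). Thus H₂(Λ₊) is a reproducing kernel Hilbert space with reproducing kernel K_w(z). -/

import Mathlib

open Complex Finset GaussianInt

noncomputable section

/-- The lattice point `i` in the Gaussian integers. -/
def ii : GaussianInt := ⟨0, 1⟩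

/-- `f` is discrete analytic on the whole lattice `Λ = ℤ + iℤ`. -/
def DAnalytic (f : GaussianInt → ℂ) : Prop :=
  ∀ z : GaussianInt,
    (f (z + 1 + ii) - f z) / (1 + Complex.I) = (f (z + 1) - f (z + ii)) / (1 - Complex.I)

/-- `f` is discrete analytic on the right half lattice `Λ₊ = {z : Re z ≥ 0}`. -/
def DAnalyticOn (f : GaussianInt → ℂ) : Prop :=
  ∀ z : GaussianInt, 0 ≤ z.re →
    (f (z + 1 + ii) - f z) / (1 + Complex.I) = (f (z + 1) - f (z + ii)) / (1 - Complex.I)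

/-- `γ 0, γ 1, …, γ n` is a path in the lattice from `a` to `b`:
consecutive points are at distance `1`. -/
def IsPath (γ : ℕ → GaussianInt) (n : ℕ) (a b : GaussianInt) : Prop :=
  γ 0 = a ∧ γ n = b ∧ ∀ k < n, ‖(γ (k + 1) : ℂ) - (γ k : ℂ)‖ = 1

/-- The discrete integral `∫_γ f δz` along the path `γ 0, …, γ n`. -/
def discInt (f : GaussianInt → ℂ) (γ : ℕ → GaussianInt) (n : ℕ) : ℂ :=
  ∑ k ∈ Finset.range n, ((f (γ k) + f (γ (k + 1))) / 2) * ((γ (k + 1) : ℂ) - (γ k : ℂ))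

/-- The canonical lattice path from `0` to `z`: first along the real axis, then vertically. -/
def cpath (z : GaussianInt) (k : ℕ) : GaussianInt :=
  ⟨z.re.sign * ((min k z.re.natAbs : ℕ) : ℤ),
   z.im.sign * ((min k (z.re.natAbs + z.im.natAbs) - z.re.natAbs : ℕ) : ℤ)⟩

/-- The length of the canonical path from `0` to `z`. -/
def cpathLen (z : GaussianInt) : ℕ := z.re.natAbs + z.im.natAbs

/-- The operator `Z`: `Zf(z) = (f(0) - f(z))/2 + ∫_0^z f δz`, the integral being taken
along the canonical path (for discrete analytic `f` the integral is path-independent). -/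
def Zop (f : GaussianInt → ℂ) : GaussianInt → ℂ := fun z =>
  (f 0 - f z) / 2 + discInt f (cpath z) (cpathLen z)

/-- The basic discrete analytic polynomials `z⁽ⁿ⁾ = Zⁿ1`. -/
def zpoly (n : ℕ) : GaussianInt → ℂ := Zop^[n] (fun _ => 1)

/-- `α₊ = (1+i)/2`. -/
def aPlus : ℂ := (1 + Complex.I) / 2
/-- `α₋ = (1-i)/2`. -/
def aMinus : ℂ := (1 - Complex.I) / 2

/-- The difference operator `δx`. -/
def dxOp (f : GaussianInt → ℂ) : GaussianInt → ℂ := fun z => f (z + 1) - f z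
/-- The difference operator `δy`. -/
def dyOp (f : GaussianInt → ℂ) : GaussianInt → ℂ := fun z => f (z + ii) - f z

/-- `f` belongs to the Hardy space `H₂(Λ₊)` with coefficient sequence `c`:
`f(z) = Σ c(n) z⁽ⁿ⁾(z)` on `Λ₊` and `Σ |c(n)|² < ∞`. -/
def MemH2 (f : GaussianInt → ℂ) (c : ℕ → ℂ) : Prop :=
  Summable (fun n => ‖c n‖ ^ 2) ∧
  ∀ z : GaussianInt, 0 ≤ z.re → HasSum (fun n => c n * zpoly n z) (f z)

/-!
Let `0 = p₀, p₁, …, p_L = w` be the canonical path and `s_k = p_{k+1} - p_k`. Since `Re w ≥ 0`,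
every step has `|s_k| = 1` and `Re s_k ≥ 0`, so `|(s_k - 1)/2| ≤ 1/√2 < 3/4`. Unwinding `Z` at
`p_{k+1}` gives `z⁽ⁿ⁺¹⁾(p_{k+1}) = ((s_k - 1)/2) z⁽ⁿ⁾(p_{k+1}) + (terms at p₀, …, p_k)`, so by
induction along the path `z⁽ⁿ⁾(w) = O((3/4)ⁿ)`. Hence `n ↦ z⁽ⁿ⁾(w)` is square summable, the kernel
series converges absolutely, and the reproducing property is the expansion of `f` at `w`.
-/

open Asymptotics Filter

theorem isBigO_pow_of_recurrence {R : Type*} [SeminormedRing R] {a b : ℕ → R} {c : R} {r : ℝ}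
    (hc : ‖c‖ < r) (hrec : ∀ n, a (n + 1) = c * a n + b n)
    (hb : b =O[atTop] fun n => r ^ n) : a =O[atTop] fun n => r ^ n := by
  have hr : 0 < r := (norm_nonneg c).trans_lt hc
  obtain ⟨C, hC⟩ := hb.bound
  obtain ⟨N, hN⟩ := eventually_atTop.1 hC
  set D := max (‖a N‖ / r ^ N) (C / (r - ‖c‖))
  have hCD : C ≤ (r - ‖c‖) * D := by
    rw [← div_le_iff₀' (by linarith)]; exact le_max_right _ _
  have key : ∀ n ≥ N, ‖a n‖ ≤ D * r ^ n := by
    intro n hn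
    induction n, hn using Nat.le_induction with
    | base => rw [← div_le_iff₀ (by positivity)]; exact le_max_left _ _
    | succ n hn ih =>
      have hbn : ‖b n‖ ≤ C * r ^ n := by simpa [abs_of_pos hr] using hN n hn
      calc ‖a (n + 1)‖ ≤ ‖c‖ * ‖a n‖ + ‖b n‖ := by
            rw [hrec]; exact (norm_add_le _ _).trans (by gcongr; exact norm_mul_le _ _)
        _ ≤ ‖c‖ * (D * r ^ n) + C * r ^ n := by gcongr
        _ ≤ D * r ^ (n + 1) := by
            rw [pow_succ]; nlinarith [pow_pos hr n]
  refine IsBigO.of_bound D (eventually_atTop.2 ⟨N, fun n hn => ?_⟩)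
  simpa [abs_of_pos hr] using key n hn

lemma cpath_zero (w : GaussianInt) : cpath w 0 = 0 := by
  ext <;> simp [cpath]

lemma cpath_cpathLen (w : GaussianInt) : cpath w (cpathLen w) = w := by
  ext
  · simp only [cpath, cpathLen, Nat.min_eq_right (Nat.le_add_right _ _), Int.sign_mul_natAbs]
  · simp only [cpath, cpathLen, min_self, Nat.add_sub_cancel_left, Int.sign_mul_natAbs]

lemma natAbs_sign_mul_natCast {x : ℤ} {m : ℕ} (hm : m ≤ x.natAbs) :
    (x.sign * m).natAbs = m := by
  rcases eq_or_ne x 0 with rfl | hx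
  · simp_all
  · rw [Int.natAbs_mul, Int.natAbs_sign_of_ne_zero hx, one_mul, Int.natAbs_natCast]

lemma sign_sign_mul_natCast_mul (x : ℤ) {m n : ℕ} (hn : n ≤ m) :
    (x.sign * m).sign * n = x.sign * n := by
  rcases Nat.eq_zero_or_pos m with rfl | hm
  · simp [Nat.le_zero.1 hn]
  · rw [Int.sign_mul, Int.sign_natCast_of_ne_zero hm.ne', mul_one, Int.sign_sign]

lemma cpathLen_cpath {w : GaussianInt} {k : ℕ} (hk : k ≤ cpathLen w) :
    cpathLen (cpath w k) = k := by
  unfold cpathLen at hk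
  simp only [cpathLen, cpath]
  rw [natAbs_sign_mul_natCast (by omega), natAbs_sign_mul_natCast (by omega)]
  omega

lemma cpath_cpath {w : GaussianInt} {k j : ℕ} (hk : k ≤ cpathLen w) (hj : j ≤ k) :
    cpath (cpath w k) j = cpath w j := by
  unfold cpathLen at hk
  ext
  · simp only [cpath]
    rw [natAbs_sign_mul_natCast (by omega), sign_sign_mul_natCast_mul _ (min_le_right _ _)]
    congr 2; omega
  · simp only [cpath]
    rw [natAbs_sign_mul_natCast (by omega), natAbs_sign_mul_natCast (by omega),
      sign_sign_mul_natCast_mul _ (by omega)]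
    congr 2; omega

lemma cpath_succ_sub {w : GaussianInt} {k : ℕ} (hk : k < cpathLen w) :
    cpath w (k + 1) - cpath w k =
      if k < w.re.natAbs then ⟨w.re.sign, 0⟩ else ⟨0, w.im.sign⟩ := by
  unfold cpathLen at hk
  split_ifs with hka
  · have hre : min (k + 1) w.re.natAbs = min k w.re.natAbs + 1 := by omega
    have him : ∀ i ≤ k + 1, min i (w.re.natAbs + w.im.natAbs) - w.re.natAbs = 0 := by omega
    ext <;> simp only [cpath, Zsqrtd.re_sub, Zsqrtd.im_sub, hre, him k (by omega),
      him (k + 1) le_rfl] <;> push_cast <;> ring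
  · have hre : ∀ i ≥ k, min i w.re.natAbs = w.re.natAbs := by omega
    have him : min (k + 1) (w.re.natAbs + w.im.natAbs) - w.re.natAbs =
        min k (w.re.natAbs + w.im.natAbs) - w.re.natAbs + 1 := by omega
    ext <;> simp only [cpath, Zsqrtd.re_sub, Zsqrtd.im_sub, hre k le_rfl, hre (k + 1) (by omega),
      him] <;> push_cast <;> ring

lemma norm_cpath_succ_sub {w : GaussianInt} {k : ℕ} (hk : k < cpathLen w) :
    ‖((cpath w (k + 1) : ℂ) - cpath w k)‖ = 1 := by
  rw [← toComplex_sub, cpath_succ_sub hk]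
  unfold cpathLen at hk
  split_ifs with hka
  · have : w.re ≠ 0 := by omega
    simp [toComplex_def', ← Int.cast_abs, Int.abs_sign_of_ne_zero this]
  · have : w.im ≠ 0 := by omega
    simp [toComplex_def', ← Int.cast_abs, Int.abs_sign_of_ne_zero this]

lemma isPath_cpath (w : GaussianInt) : IsPath (cpath w) (cpathLen w) 0 w :=
  ⟨cpath_zero w, cpath_cpathLen w, fun _ hk => norm_cpath_succ_sub hk⟩

lemma re_cpath_succ_sub_nonneg {w : GaussianInt} (hw : 0 ≤ w.re) {k : ℕ} (hk : k < cpathLen w) :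
    0 ≤ ((cpath w (k + 1) : ℂ) - cpath w k).re := by
  rw [← toComplex_sub, cpath_succ_sub hk]
  split_ifs <;> simp [toComplex_def', Int.sign_nonneg_iff.2 hw]

lemma norm_sub_one_div_two_lt {s : ℂ} (hs : ‖s‖ = 1) (hre : 0 ≤ s.re) :
    ‖(s - 1) / 2‖ < 3 / 4 := by
  have hsq : ‖s - 1‖ ^ 2 ≤ 2 := by
    rw [Complex.sq_norm, Complex.normSq_sub, ← Complex.sq_norm, hs]
    simp only [map_one, mul_one]
    linarith
  rw [norm_div, Complex.norm_two]
  nlinarith [norm_nonneg (s - 1)]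

lemma discInt_succ (f : GaussianInt → ℂ) (γ : ℕ → GaussianInt) (n : ℕ) :
    discInt f γ (n + 1) =
      discInt f γ n + (f (γ n) + f (γ (n + 1))) / 2 * ((γ (n + 1) : ℂ) - γ n) :=
  sum_range_succ _ _

lemma isBigO_discInt {F : ℕ → GaussianInt → ℂ} {γ : ℕ → GaussianInt} {k : ℕ} {g : ℕ → ℝ}
    (h : ∀ j ≤ k, (fun n => F n (γ j)) =O[atTop] g) :
    (fun n => discInt (F n) γ k) =O[atTop] g := by
  refine IsBigO.fun_sum fun j hj => ?_
  have hj : j < k := mem_range.1 hj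
  refine (((h j hj.le).add (h (j + 1) hj)).const_mul_left
    (((γ (j + 1) : ℂ) - γ j) / 2)).congr_left fun n => ?_
  ring

lemma Zop_zero (f : GaussianInt → ℂ) : Zop f 0 = 0 := by
  simp [Zop, discInt, cpathLen]

lemma Zop_cpath (f : GaussianInt → ℂ) {w : GaussianInt} {k : ℕ} (hk : k ≤ cpathLen w) :
    Zop f (cpath w k) = (f 0 - f (cpath w k)) / 2 + discInt f (cpath w) k := by
  rw [Zop, cpathLen_cpath hk]
  congr 1
  refine sum_congr rfl fun j hj => ?_
  have hj : j < k := mem_range.1 hj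
  rw [cpath_cpath hk hj.le, cpath_cpath hk hj]

lemma Zop_cpath_succ (f : GaussianInt → ℂ) {w : GaussianInt} {k : ℕ} (hk : k + 1 ≤ cpathLen w) :
    Zop f (cpath w (k + 1)) =
      ((cpath w (k + 1) : ℂ) - cpath w k - 1) / 2 * f (cpath w (k + 1)) +
        ((f 0 + ((cpath w (k + 1) : ℂ) - cpath w k) * f (cpath w k)) / 2 +
          discInt f (cpath w) k) := by
  rw [Zop_cpath f hk, discInt_succ]
  ring

lemma zpoly_succ (n : ℕ) : zpoly (n + 1) = Zop (zpoly n) :=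
  Function.iterate_succ_apply' _ _ _

lemma isBigO_zpoly {w : GaussianInt} (hw : 0 ≤ w.re) :
    (fun n => zpoly n w) =O[atTop] fun n => (3 / 4 : ℝ) ^ n := by
  suffices h : ∀ k ≤ cpathLen w, ∀ j ≤ k,
      (fun n => zpoly n (cpath w j)) =O[atTop] fun n => (3 / 4 : ℝ) ^ n by
    simpa only [cpath_cpathLen] using h _ le_rfl _ le_rfl
  intro k
  induction k with
  | zero =>
    rintro - j hj
    rw [Nat.le_zero.1 hj, cpath_zero]
    refine isBigO_pow_of_recurrence (c := 0) (b := 0) (by norm_num) (fun n => ?_) (isBigO_zero _ _)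
    simp [zpoly_succ, Zop_zero]
  | succ k ih =>
    intro hk j hj
    rcases hj.lt_or_eq with hj | rfl
    · exact ih (by omega) j (by omega)
    have hprev := ih (by omega)
    refine isBigO_pow_of_recurrence (norm_sub_one_div_two_lt ((isPath_cpath w).2.2 k hk)
      (re_cpath_succ_sub_nonneg hw hk)) (fun n => by rw [zpoly_succ, Zop_cpath_succ _ hk]) ?_
    refine ((((hprev 0 (Nat.zero_le _)).add ((hprev k le_rfl).const_mul_left
      ((cpath w (k + 1) : ℂ) - cpath w k))).const_mul_left (1 / 2 : ℂ)).congr_left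
        fun n => ?_).add (isBigO_discInt hprev)
    rw [cpath_zero]
    ring

lemma summable_norm_zpoly_mul_conj {z w : GaussianInt} (hz : 0 ≤ z.re) (hw : 0 ≤ w.re) :
    Summable fun n => ‖zpoly n z * starRingEnd ℂ (zpoly n w)‖ := by
  have hgeom : Summable fun n : ℕ => (3 / 4 : ℝ) ^ n * (3 / 4) ^ n := by
    simpa only [← mul_pow] using summable_geometric_of_lt_one (by norm_num) (by norm_num)
  refine summable_of_isBigO_nat hgeom ?_
  simpa only [norm_mul, RCLike.norm_conj] using
    (isBigO_zpoly hz).norm_left.mul (isBigO_zpoly hw).norm_left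

/-- For `w ∈ Λ₊`, `Σ |w⁽ⁿ⁾(w)|² < ∞`; hence the kernel
`K_w(z) = Σ z⁽ⁿ⁾(z) conj (w⁽ⁿ⁾(w))` converges absolutely on `Λ₊`, `K_w ∈ H₂(Λ₊)` with
coefficients `conj (w⁽ⁿ⁾(w))`, and `⟨f, K_w⟩ = f(w)` for every `f ∈ H₂(Λ₊)`:
`H₂(Λ₊)` is a reproducing kernel Hilbert space with kernel `K_w`. -/
theorem stmt12 (w : GaussianInt) (hw : 0 ≤ w.re) :
    Summable (fun n : ℕ => ‖zpoly n w‖ ^ 2) ∧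
    (∀ z : GaussianInt, 0 ≤ z.re →
      Summable (fun n : ℕ => ‖zpoly n z * (starRingEnd ℂ) (zpoly n w)‖)) ∧
    MemH2 (fun z => ∑' n : ℕ, zpoly n z * (starRingEnd ℂ) (zpoly n w))
      (fun n => (starRingEnd ℂ) (zpoly n w)) ∧
    ∀ (f : GaussianInt → ℂ) (c : ℕ → ℂ), MemH2 f c →
      HasSum (fun n : ℕ => c n * (starRingEnd ℂ) ((starRingEnd ℂ) (zpoly n w))) (f w) := by
  have hsq : Summable fun n : ℕ => ‖zpoly n w‖ ^ 2 := by
    simpa only [norm_mul, RCLike.norm_conj, sq] using summable_norm_zpoly_mul_conj hw hw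
  refine ⟨hsq, fun z hz => summable_norm_zpoly_mul_conj hz hw,
    ⟨by simpa only [RCLike.norm_conj] using hsq, fun z hz => ?_⟩, fun f c hf => ?_⟩
  · simpa only [mul_comm] using (summable_norm_zpoly_mul_conj hz hw).of_norm.hasSum
  · simpa only [RCLike.conj_conj] using hf.2 w hw

end
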